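/- Let S be a Cu-semigroup, let y be a full element of S, and let (y_n)_{n≥1} be a sequence of full elements of S with y_n ≤ y_{n+1} ≤ y for all n. Assume that F_y(S) ≠ ∅ and that lim_{n→∞} ρ(y, y_n) < ∞ (the sequence (ρ(y,y_n)) is decreasing, so this limit exists in [0,∞]; likewise (ρ(y_n,y)) is increasing and bounded above by 1 and (rc(S,y_n)) is decreasing, so their limits exist). Then (1/lim_{n→∞} ρ(y_n, y))·rc(S,y) ≤ lim_{n→∞} rc(S, y_n) ≤ (lim_{n→∞} ρ(y, y_n))·rc(S,y), with the convention γ·∞ = ∞ for γ ∈ (0,∞). -/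

import Mathlib

/-!
If `λ(a) ≤ s·λ(b)` for every functional `λ`, then `r`-comparison relative to `a` yields
`s·r`-comparison relative to `b`; taking infima over `s` and `r` gives `ρ(a,b)⁻¹ · rc(b) ≤ rc(a)`
for all `a`, `b`. Applied to `(yₙ, y)` this is the lower bound. Applied to `(y, yₙ)` it gives
`rc(yₙ) ≤ ρ(y, yₙ) · rc(y)` whenever `ρ(y, yₙ)` is finite, because a functional normalised at `y`
forces `ρ(y, yₙ) ≥ 1`; indices with `ρ(y, yₙ) = ∞` are dominated by any index where it is finite.
-/

open scoped ENNReal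

/-- `x' ≪ x`: for every increasing sequence whose supremum is `≥ x`,
some term of the sequence dominates `x'`. -/
def CuWayBelow {S : Type*} [Preorder S] (x' x : S) : Prop :=
  ∀ f : ℕ → S, Monotone f → ∀ s : S, IsLUB (Set.range f) s → x ≤ s → ∃ n, x' ≤ f n

/-- A `Cu`-semigroup: a partially ordered abelian monoid whose least element is `0`,
satisfying the axioms (O1)–(O4). -/
class CuSemigroup (S : Type*) extends AddCommMonoid S, PartialOrder S where
  add_le_add_left : ∀ a b : S, a ≤ b → ∀ c : S, c + a ≤ c + b
  zero_le : ∀ x : S, 0 ≤ x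
  O1 : ∀ f : ℕ → S, Monotone f → ∃ s : S, IsLUB (Set.range f) s
  O2 : ∀ x : S, ∃ f : ℕ → S, (∀ n, CuWayBelow (f n) (f (n + 1))) ∧ IsLUB (Set.range f) x
  O3 : ∀ {x' x y' y : S}, CuWayBelow x' x → CuWayBelow y' y → CuWayBelow (x' + y') (x + y)
  O4 : ∀ f g : ℕ → S, Monotone f → Monotone g → ∀ a b : S,
      IsLUB (Set.range f) a → IsLUB (Set.range g) b →
      IsLUB (Set.range fun n => f n + g n) (a + b)

/-- A functional on a `Cu`-semigroup: a map `S → [0,∞]` which is additive, order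
preserving, sends `0` to `0`, and preserves suprema of increasing sequences. -/
structure IsCuFunctional {S : Type*} [CuSemigroup S] (Λ : S → ℝ≥0∞) : Prop where
  map_zero : Λ 0 = 0
  map_add : ∀ x y : S, Λ (x + y) = Λ x + Λ y
  mono : Monotone Λ
  map_sup : ∀ f : ℕ → S, Monotone f → ∀ s : S, IsLUB (Set.range f) s → Λ s = ⨆ n, Λ (f n)

/-- `x` is full if `∞ · x = sup_n (n • x)` is the largest element of `S`. -/
def IsFull {S : Type*} [CuSemigroup S] (x : S) : Prop :=
  ∀ s : S, IsLUB (Set.range fun n : ℕ => n • x) s → ∀ y : S, y ≤ s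

/-- `F_w(S) ≠ ∅`: there exists a functional normalized at `w`. -/
def FNormNonempty {S : Type*} [CuSemigroup S] (w : S) : Prop :=
  ∃ Λ : S → ℝ≥0∞, IsCuFunctional Λ ∧ Λ w = 1

/-- The rank ratio `ρ(x, y)`: the infimum of all `r ∈ (0,∞)` with
`λ(x) ≤ r·λ(y)` for every functional `λ`; `∞` if there is no such `r`. -/
noncomputable def rankRatio {S : Type*} [CuSemigroup S] (x y : S) : ℝ≥0∞ :=
  sInf {r : ℝ≥0∞ | 0 < r ∧ r ≠ ⊤ ∧ ∀ Λ : S → ℝ≥0∞, IsCuFunctional Λ → Λ x ≤ r * Λ y}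

/-- `S` has `r`-comparison relative to `w`. -/
def HasRComparison {S : Type*} [CuSemigroup S] (r : ℝ≥0∞) (w : S) : Prop :=
  ∀ x y : S, (∀ Λ : S → ℝ≥0∞, IsCuFunctional Λ → Λ x + r * Λ w ≤ Λ y) → x ≤ y

/-- The radius of comparison of `S` relative to `w`: the infimum of all `r ∈ (0,∞)`
for which `S` has `r`-comparison relative to `w`; `∞` if there is no such `r`. -/
noncomputable def rc {S : Type*} [CuSemigroup S] (w : S) : ℝ≥0∞ :=
  sInf {r : ℝ≥0∞ | 0 < r ∧ r ≠ ⊤ ∧ HasRComparison r w}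

section RankRatio

variable {S : Type*} [CuSemigroup S]

theorem HasRComparison.of_forall_le_mul {r s : ℝ≥0∞} {a b : S} (h : HasRComparison r a)
    (hab : ∀ Λ : S → ℝ≥0∞, IsCuFunctional Λ → Λ a ≤ s * Λ b) :
    HasRComparison (s * r) b := by
  refine fun x z hxz => h x z fun Λ hΛ => le_trans (add_le_add le_rfl ?_) (hxz Λ hΛ)
  calc r * Λ a ≤ r * (s * Λ b) := by gcongr; exact hab Λ hΛ
    _ = s * r * Λ b := by ring

theorem inv_rankRatio_mul_rc_le (a b : S) : (rankRatio a b)⁻¹ * rc b ≤ rc a := by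
  refine le_sInf fun r ⟨hr0, hrT, hr⟩ => ?_
  simp only [rankRatio, ENNReal.inv_sInf, ENNReal.iSup_mul]
  refine iSup₂_le fun s ⟨hs0, hsT, hs⟩ => ?_
  have hrcb : rc b ≤ s * r :=
    sInf_le ⟨ENNReal.mul_pos hs0.ne' hr0.ne', ENNReal.mul_ne_top hsT hrT, hr.of_forall_le_mul hs⟩
  calc s⁻¹ * rc b ≤ s⁻¹ * (s * r) := by gcongr
    _ = r := ENNReal.inv_mul_cancel_left hs0.ne' hsT

theorem rc_le_rankRatio_mul_rc {a b : S} (h0 : rankRatio a b ≠ 0) (hT : rankRatio a b ≠ ⊤) :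
    rc b ≤ rankRatio a b * rc a :=
  (ENNReal.inv_mul_le_iff h0 hT).mp (inv_rankRatio_mul_rc_le a b)

theorem one_le_rankRatio_of_le {a b : S} (ha : FNormNonempty a) (hba : b ≤ a) :
    1 ≤ rankRatio a b := by
  obtain ⟨Λ, hΛ, hΛa⟩ := ha
  refine le_sInf fun r ⟨_, _, hr⟩ => ?_
  calc 1 = Λ a := hΛa.symm
    _ ≤ r * Λ b := hr Λ hΛ
    _ ≤ r * Λ a := by gcongr; exact hΛ.mono hba
    _ = r := by rw [hΛa, mul_one]

end RankRatio

theorem stmt1_general {S : Type*} [CuSemigroup S] (y : S) (ys : ℕ → S)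
    (hle : ∀ n, ys n ≤ y)
    (hFy : FNormNonempty y)
    (hlim : (⨅ n, rankRatio y (ys n)) ≠ ⊤) :
    (⨆ n, rankRatio (ys n) y)⁻¹ * rc y ≤ (⨅ n, rc (ys n)) ∧
      (⨅ n, rc (ys n)) ≤ (⨅ n, rankRatio y (ys n)) * rc y := by
  have hρ : ∀ n, 1 ≤ rankRatio y (ys n) := fun n => one_le_rankRatio_of_le hFy (hle n)
  constructor
  · refine le_iInf fun n => le_trans ?_ (inv_rankRatio_mul_rc_le (ys n) y)
    gcongr
    exact le_iSup (fun n => rankRatio (ys n) y) n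
  · obtain ⟨m, hm⟩ : ∃ m, rankRatio y (ys m) ≠ ⊤ := by
      by_contra! h
      simp [h] at hlim
    rw [ENNReal.iInf_mul fun _ h => absurd h (one_pos.trans_le (le_iInf hρ)).ne']
    refine le_iInf fun n => ?_
    obtain ⟨k, hkT, hkn⟩ : ∃ k, rankRatio y (ys k) ≠ ⊤ ∧ rankRatio y (ys k) ≤ rankRatio y (ys n) :=
      if h : rankRatio y (ys n) = ⊤ then ⟨m, hm, h ▸ le_top⟩ else ⟨n, h, le_rfl⟩
    calc ⨅ k, rc (ys k) ≤ rc (ys k) := iInf_le _ k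
      _ ≤ rankRatio y (ys k) * rc y :=
        rc_le_rankRatio_mul_rc (one_pos.trans_le (hρ k)).ne' hkT
      _ ≤ rankRatio y (ys n) * rc y := by gcongr

/-- Theorem (MainThmForRCLim): for an increasing sequence `(y n)` of full elements
below a full element `y` with `F_y(S) ≠ ∅` and `lim_n ρ(y, y n) < ∞`
(the limits being `⨅`/`⨆` of the respective monotone sequences),
`(1/lim_n ρ(y n, y)) · rc(S,y) ≤ lim_n rc(S, y n) ≤ (lim_n ρ(y, y n)) · rc(S,y)`. -/
theorem stmt1 {S : Type*} [CuSemigroup S] (y : S) (ys : ℕ → S)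
    (hy : IsFull y) (hys : ∀ n, IsFull (ys n))
    (hmono : ∀ n, ys n ≤ ys (n + 1)) (hle : ∀ n, ys n ≤ y)
    (hFy : FNormNonempty y)
    (hlim : (⨅ n, rankRatio y (ys n)) ≠ ⊤) :
    (⨆ n, rankRatio (ys n) y)⁻¹ * rc y ≤ (⨅ n, rc (ys n)) ∧
      (⨅ n, rc (ys n)) ≤ (⨅ n, rankRatio y (ys n)) * rc y :=
  stmt1_general y ys hle hFy hlim
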